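/- Let Σ be a finite alphabet of size q ≥ 2, n ≥ 1, δ ∈ (0,1), and set α = (1 − 1/q)(1 + δ). Let (K, Enc, Dec) be a finitary secret-key multi-message code over Σ with message space M, codeword length n, and soundness error ε_s (for every fixed γ̂ ∈ Σ^n, P_sk[Dec(sk, γ̂) ≠ invalid] ≤ ε_s). Suppose there exists a message μ ∈ M such that, with γ = Enc(sk, μ) and f the truncated uniform resampler with budget αn, the error-correction failure satisfies P[Dec(sk, f(γ)) ≠ μ ∧ f(γ) ≠ γ] ≤ ε_c. Then ε_s + ε_c ≥ 1 − q^{−n} − exp(−δ²(1 − 1/q)n/3). In particular, no secret-key code over Σ can simultaneously have negligible soundness error and negligible error-correction failure at tampering rate (1 − 1/q)(1 + δ). -/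

import Mathlib

open Finset Classical

/-- The two non-message decoding outcomes of a multi-message secret-key code
(the decoder outputs either a message, or one of these flags). -/
inductive DecFlag where
  | invalid
  | tampered
deriving DecidableEq

/-- The truncated uniform resampler with budget `b`: on codeword `γ` and uniform
randomness `u`, it outputs `u` if `dist(u, γ) ≤ b` and `γ` otherwise. -/
noncomputable def resample {S : Type} [Fintype S] [DecidableEq S] {n : ℕ}
    (b : ℝ) (γ u : Fin n → S) : Fin n → S :=
  if (hammingDist u γ : ℝ) ≤ b then u else γ

/-!
A uniform word `u` is within Hamming distance `αn` of the codeword `γ = Enc(sk, μ)` except with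
probability `exp(-δ²(1 - 1/q)n/3)`: this is a Chernoff bound, Markov's inequality for
`(1 + δ)^dist(u, γ)`, whose sum over `u` is `(1 + (q - 1)(1 + δ))^n = (q(1 + (1 - 1/q)δ))^n`.
Moreover `u = γ` with probability `q^(-n)`. Otherwise the resampler outputs `u` itself, so decoding
`u` either fails to return `μ`, an error-correction failure, or does not return `invalid`, which,
`u` being independent of the key, has probability at most `εs`.
-/

lemma add_sq_div_three_le_mul_log_one_add {δ : ℝ} (h0 : 0 ≤ δ) (h1 : δ ≤ 1) :
    δ + δ ^ 2 / 3 ≤ (1 + δ) * Real.log (1 + δ) :=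
  calc δ + δ ^ 2 / 3 ≤ (1 + δ) * (2 * δ / (δ + 2)) := by
        rw [mul_div_assoc', le_div_iff₀ (by linarith)]; nlinarith
    _ ≤ (1 + δ) * Real.log (1 + δ) := by
        gcongr; exact Real.le_log_one_add_of_nonneg h0

lemma ite_le_ite_add_ite {α : Type*} [AddCommMonoid α] [PartialOrder α] [IsOrderedAddMonoid α]
    {P Q R : Prop} [Decidable P] [Decidable Q] [Decidable R] {a : α} (ha : 0 ≤ a)
    (h : P → Q ∨ R) :
    (if P then a else 0) ≤ (if Q then a else 0) + (if R then a else 0) := by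
  split_ifs <;> simp_all [le_add_of_nonneg_left, add_nonneg]

lemma sum_sum_ite_mul_inv_card_le {K X : Type*} [Fintype K] [Fintype X] [Nonempty X]
    (w : K → ℝ) (P : K → X → Prop) [∀ k x, Decidable (P k x)] {ε : ℝ}
    (h : ∀ x, ∑ k, (if P k x then w k else 0) ≤ ε) :
    ∑ k, ∑ x, (if P k x then w k * (Fintype.card X : ℝ)⁻¹ else 0) ≤ ε := by
  rw [sum_comm]
  calc _ = ∑ x : X, (∑ k, if P k x then w k else 0) * (Fintype.card X : ℝ)⁻¹ := by
        simp only [sum_mul, ite_mul, zero_mul]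
    _ ≤ ∑ _x : X, ε * (Fintype.card X : ℝ)⁻¹ := by gcongr with x; exact h x
    _ = ε := by rw [sum_const, card_univ, nsmul_eq_mul]; field_simp

section HammingBall

variable {ι S : Type*} [Fintype ι] [DecidableEq ι] [Fintype S] [DecidableEq S]

lemma sum_pow_hammingDist (γ : ι → S) (c : ℝ) :
    ∑ u : ι → S, c ^ hammingDist u γ
      = (1 + (Fintype.card S - 1) * c) ^ Fintype.card ι := by
  have hprod (u : ι → S) : c ^ hammingDist u γ = ∏ i, if u i = γ i then 1 else c := by
    rw [prod_ite, prod_const_one, prod_const, one_mul]; rfl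
  have hfactor (i : ι) :
      ∑ s : S, (if s = γ i then 1 else c) = 1 + (Fintype.card S - 1) * c := by
    rw [← add_sum_erase _ _ (mem_univ (γ i)), if_pos rfl,
      sum_congr rfl fun s hs => if_neg (ne_of_mem_erase hs), sum_const,
      card_erase_of_mem (mem_univ _), card_univ, nsmul_eq_mul,
      Nat.cast_pred (Fintype.card_pos_iff.mpr ⟨γ i⟩)]
  simp_rw [hprod, ← Fintype.prod_sum fun i s => if s = γ i then 1 else c, hfactor, prod_const,
    card_univ]

theorem card_hammingDist_gt_le [Nonempty S] (γ : ι → S) {δ : ℝ} (h0 : 0 ≤ δ) (h1 : δ ≤ 1) :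
    (#{u | (1 - (Fintype.card S : ℝ)⁻¹) * (1 + δ) * Fintype.card ι < hammingDist u γ} : ℝ)
      ≤ (Fintype.card S : ℝ) ^ Fintype.card ι
          * Real.exp (-(δ ^ 2 * (1 - (Fintype.card S : ℝ)⁻¹) * Fintype.card ι / 3)) := by
  set q : ℝ := (Fintype.card S : ℝ)
  set N := Fintype.card ι
  set p := 1 - q⁻¹
  set L := Real.log (1 + δ)
  have hq : 1 ≤ q := Nat.one_le_cast.mpr Fintype.card_pos
  have hp : 0 ≤ p := sub_nonneg.mpr (inv_le_one_of_one_le₀ hq)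
  have hexpL (m : ℕ) : Real.exp (m * L) = (1 + δ) ^ m := by
    rw [Real.exp_nat_mul, Real.exp_log (by linarith)]
  have hmarkov : #{u | p * (1 + δ) * N < hammingDist u γ} * Real.exp (p * (1 + δ) * N * L)
      ≤ ∑ u : ι → S, (1 + δ) ^ hammingDist u γ := by
    rw [← nsmul_eq_mul]
    refine (card_nsmul_le_sum _ _ _ fun u hu => ?_).trans
      (sum_le_univ_sum_of_nonneg fun u => by positivity)
    rw [← hexpL]
    exact Real.exp_le_exp.mpr (mul_le_mul_of_nonneg_right (mem_filter.mp hu).2.le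
      (Real.log_nonneg (by linarith)))
  have hmgf : ∑ u : ι → S, (1 + δ) ^ hammingDist u γ ≤ q ^ N * Real.exp (N * (p * δ)) := by
    have hbase : 1 + (q - 1) * (1 + δ) = q * (1 + p * δ) := by
      simp only [p]; field_simp; ring
    rw [sum_pow_hammingDist, hbase, mul_pow, Real.exp_nat_mul]
    gcongr
    linarith [Real.add_one_le_exp (p * δ)]
  have hexponent : N * (p * δ) - p * (1 + δ) * N * L ≤ -(δ ^ 2 * p * N / 3) := by
    have := mul_le_mul_of_nonneg_left (add_sq_div_three_le_mul_log_one_add h0 h1)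
      (mul_nonneg hp (Nat.cast_nonneg N : (0 : ℝ) ≤ N))
    nlinarith
  calc _ ≤ q ^ N * Real.exp (N * (p * δ)) / Real.exp (p * (1 + δ) * N * L) := by
        rw [le_div_iff₀ (Real.exp_pos _)]; exact hmarkov.trans hmgf
    _ = q ^ N * Real.exp (N * (p * δ) - p * (1 + δ) * N * L) := by
        rw [Real.exp_sub, mul_div_assoc]
    _ ≤ _ := by gcongr

theorem one_sub_le_sum_ite_hammingDist_le [Nonempty S] (γ : ι → S) {δ : ℝ} (h0 : 0 ≤ δ)
    (h1 : δ ≤ 1) :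
    1 - ((Fintype.card S : ℝ) ^ Fintype.card ι)⁻¹
        - Real.exp (-(δ ^ 2 * (1 - (Fintype.card S : ℝ)⁻¹) * Fintype.card ι / 3))
      ≤ ∑ u : ι → S,
          if (hammingDist u γ : ℝ) ≤ (1 - (Fintype.card S : ℝ)⁻¹) * (1 + δ) * Fintype.card ι
              ∧ u ≠ γ
          then ((Fintype.card S : ℝ) ^ Fintype.card ι)⁻¹ else 0 := by
  set b := (1 - (Fintype.card S : ℝ)⁻¹) * (1 + δ) * Fintype.card ι
  set Q := (Fintype.card S : ℝ) ^ Fintype.card ι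
  set E := Real.exp (-(δ ^ 2 * (1 - (Fintype.card S : ℝ)⁻¹) * Fintype.card ι / 3))
  set G : Finset (ι → S) := {u | (hammingDist u γ : ℝ) ≤ b ∧ u ≠ γ}
  set B : Finset (ι → S) := {u | b < hammingDist u γ}
  have hcover : Q ≤ 1 + #G + #B := by
    have hsub : univ ⊆ {γ} ∪ G ∪ B := by
      intro u _
      by_cases hu : u = γ
      · simp [hu]
      · simpa [G, B, hu] using le_or_gt (hammingDist u γ : ℝ) b
    have := (card_le_card hsub).trans ((card_union_le _ _).trans
      (add_le_add_left (card_union_le _ _) _))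
    rw [card_univ, Fintype.card_fun, card_singleton] at this
    simp only [Q]
    exact_mod_cast this
  have hB : #B ≤ Q * E := card_hammingDist_gt_le γ h0 h1
  have hQ : 0 < Q := by positivity
  rw [sum_ite, sum_const_zero, add_zero, sum_const, nsmul_eq_mul]
  calc 1 - Q⁻¹ - E = (Q - 1 - Q * E) * Q⁻¹ := by field_simp
    _ ≤ #G * Q⁻¹ := by gcongr; linarith

end HammingBall

theorem stmt_6_general
    {S K M : Type} [Fintype S] [DecidableEq S] [Fintype K]
    {n : ℕ} (hq : 2 ≤ Fintype.card S)
    (δ : ℝ) (hδ0 : 0 < δ) (hδ1 : δ < 1)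
    (w : K → ℝ) (hw0 : ∀ k, 0 ≤ w k) (hw1 : ∑ k, w k = 1)
    (Enc : K → M → Fin n → S) (Dec : K → (Fin n → S) → M ⊕ DecFlag)
    (εs εc : ℝ)
    (hsound : ∀ γ : Fin n → S,
      (∑ k, if Dec k γ ≠ Sum.inr DecFlag.invalid then w k else 0) ≤ εs)
    (μ : M)
    (hec :
      (∑ k, ∑ u : Fin n → S,
        if Dec k (resample ((1 - (Fintype.card S : ℝ)⁻¹) * (1 + δ) * n) (Enc k μ) u)
              ≠ Sum.inl μ
           ∧ resample ((1 - (Fintype.card S : ℝ)⁻¹) * (1 + δ) * n) (Enc k μ) u ≠ Enc k μ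
        then w k * ((Fintype.card S : ℝ) ^ n)⁻¹ else 0) ≤ εc) :
    1 - ((Fintype.card S : ℝ) ^ n)⁻¹
      - Real.exp (-(δ ^ 2 * (1 - (Fintype.card S : ℝ)⁻¹) * n / 3)) ≤ εs + εc := by
  have : Nonempty S := Fintype.card_pos_iff.mp (by omega)
  set b := (1 - (Fintype.card S : ℝ)⁻¹) * (1 + δ) * n
  set c := ((Fintype.card S : ℝ) ^ n)⁻¹
  set E := Real.exp (-(δ ^ 2 * (1 - (Fintype.card S : ℝ)⁻¹) * n / 3))
  have htamper (k : K) :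
      1 - c - E ≤ ∑ u, if (hammingDist u (Enc k μ) : ℝ) ≤ b ∧ u ≠ Enc k μ then c else 0 := by
    simpa using one_sub_le_sum_ite_hammingDist_le (Enc k μ) hδ0.le hδ1.le
  have hsplit (k : K) (u : Fin n → S) :
      (if (hammingDist u (Enc k μ) : ℝ) ≤ b ∧ u ≠ Enc k μ then w k * c else 0)
        ≤ (if Dec k (resample b (Enc k μ) u) ≠ Sum.inl μ ∧ resample b (Enc k μ) u ≠ Enc k μ
            then w k * c else 0)
          + (if Dec k u ≠ Sum.inr DecFlag.invalid then w k * c else 0) := by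
    refine ite_le_ite_add_ite (mul_nonneg (hw0 k) (by positivity)) fun hu => ?_
    rw [resample, if_pos hu.1]
    by_cases hdec : Dec k u = Sum.inl μ
    · exact Or.inr (by simp [hdec])
    · exact Or.inl ⟨hdec, hu.2⟩
  have hsound_avg :
      ∑ k, ∑ u : Fin n → S, (if Dec k u ≠ Sum.inr DecFlag.invalid then w k * c else 0) ≤ εs := by
    simpa [c, Fintype.card_fun] using sum_sum_ite_mul_inv_card_le w _ hsound
  calc 1 - c - E = ∑ k, w k * (1 - c - E) := by rw [← sum_mul, hw1, one_mul]
    _ ≤ ∑ k, w k * ∑ u, if (hammingDist u (Enc k μ) : ℝ) ≤ b ∧ u ≠ Enc k μ then c else 0 := by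
        gcongr with k; exacts [hw0 k, htamper k]
    _ ≤ ∑ k, ∑ u, ((if Dec k (resample b (Enc k μ) u) ≠ Sum.inl μ
            ∧ resample b (Enc k μ) u ≠ Enc k μ then w k * c else 0)
          + (if Dec k u ≠ Sum.inr DecFlag.invalid then w k * c else 0)) := by
        simp only [mul_sum, mul_ite, mul_zero]
        gcongr with k _ u _
        exact hsplit k u
    _ ≤ εs + εc := by
        simp only [sum_add_distrib]
        linarith

/-- For a secret-key multi-message code over an alphabet of size `q ≥ 2`
with soundness error `εs`: if for some message `μ` the error-correction failure against
the truncated uniform resampler with budget `α·n` (where `α = (1 - 1/q)(1 + δ)`,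
`δ ∈ (0,1)`) is at most `εc`, then `εs + εc ≥ 1 - q^(-n) - exp(-δ²(1 - 1/q)n/3)`. -/
theorem stmt_6
    {S K M : Type} [Fintype S] [DecidableEq S] [Fintype K] [Nonempty K]
    {n : ℕ} (hn : 1 ≤ n) (hq : 2 ≤ Fintype.card S)
    (δ : ℝ) (hδ0 : 0 < δ) (hδ1 : δ < 1)
    (w : K → ℝ) (hw0 : ∀ k, 0 ≤ w k) (hw1 : ∑ k, w k = 1)
    (Enc : K → M → Fin n → S) (Dec : K → (Fin n → S) → M ⊕ DecFlag)
    (εs εc : ℝ)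
    (hsound : ∀ γ : Fin n → S,
      (∑ k, if Dec k γ ≠ Sum.inr DecFlag.invalid then w k else 0) ≤ εs)
    (μ : M)
    (hec :
      (∑ k, ∑ u : Fin n → S,
        if Dec k (resample ((1 - (Fintype.card S : ℝ)⁻¹) * (1 + δ) * n) (Enc k μ) u)
              ≠ Sum.inl μ
           ∧ resample ((1 - (Fintype.card S : ℝ)⁻¹) * (1 + δ) * n) (Enc k μ) u ≠ Enc k μ
        then w k * ((Fintype.card S : ℝ) ^ n)⁻¹ else 0) ≤ εc) :
    1 - ((Fintype.card S : ℝ) ^ n)⁻¹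
      - Real.exp (-(δ ^ 2 * (1 - (Fintype.card S : ℝ)⁻¹) * n / 3)) ≤ εs + εc :=
  stmt_6_general hq δ hδ0 hδ1 w hw0 hw1 Enc Dec εs εc hsound μ hec
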